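/- arXiv:1006.5397 — 5 statements merged into one kernel-verified Lean document; each statement's English description precedes it below -/
import Mathlib

section
/- The Razak building block A(n,n') contains no nonzero projections: if p ∈ A(n,n') satisfies p = p* and p·p = p, then p = 0. -/
/-
The trace of an idempotent matrix is its rank, so along a continuous path of idempotents the trace
is a continuous function with values in `ℕ`, hence constant on `[0,1]`. For an idempotent `p` in
`A(n,n')` with boundary matrix `c` this gives `a · tr c = tr p(0) = tr p(1) = (a + 1) · tr c`, so
`tr c = 0`; then every `p(t)` is an idempotent of trace zero, i.e. `p(t) = 0`.
-/

open scoped Matrix.Norms.L2Operator ComplexOrder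
open Filter MeasureTheory

noncomputable section

/-- The unit interval `[0,1]`. -/
abbrev I01 : Type := unitInterval

/-- Square complex matrices of size `N`. -/
abbrev Mat (N : ℕ) : Type := Matrix (Fin N) (Fin N) ℂ

/-- Block-diagonal matrix with `m` diagonal blocks of size `k` (block `0` in the upper left),
realized as an `N × N` matrix, where `h : k * m = N`. -/
def cdiag {k m N : ℕ} (h : k * m = N) (blocks : Fin m → Mat k) : Mat N :=
  Matrix.reindex (finProdFinEquiv.trans (finCongr h)) (finProdFinEquiv.trans (finCongr h))
    (Matrix.blockDiagonal blocks)

/-- The Razak building block `A(n, n')` with `n' = n * (a + 1)`, realized as a subset of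
`C([0,1], M_N(ℂ))` where `h : n * (a + 1) = N`: those continuous matrix-valued functions `f`
for which there is `c ∈ M_n(ℂ)` with `f 0 = diag(c, …, c, 0_n)` (`a` copies of `c`) and
`f 1 = diag(c, …, c)` (`a + 1` copies of `c`). -/
def razakA (n a : ℕ) {N : ℕ} (h : n * (a + 1) = N) : Set C(I01, Mat N) :=
  {f | ∃ c : Mat n,
    f 0 = cdiag h (fun i : Fin (a + 1) => if (i : ℕ) < a then c else 0) ∧
    f 1 = cdiag h (fun _ : Fin (a + 1) => c)}

/-- The normalized trace of a square complex matrix. -/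
def ntr {N : ℕ} (M : Mat N) : ℂ := M.trace / N

namespace Matrix

variable {ι K : Type*} [Fintype ι] [DecidableEq ι]

theorem isIdempotentElem_toLin' [CommSemiring K] {A : Matrix ι ι K} (hA : IsIdempotentElem A) :
    IsIdempotentElem (toLin' A) :=
  hA.map toLinAlgEquiv'

theorem trace_eq_rank_of_isIdempotentElem [Field K] {A : Matrix ι ι K}
    (hA : IsIdempotentElem A) : A.trace = A.rank := by
  rw [← trace_toLin'_eq,
    (LinearMap.IsIdempotentElem.isProj_range _ (isIdempotentElem_toLin' hA)).trace, rank,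
    toLin'_apply']

theorem eq_zero_of_isIdempotentElem_of_trace_eq_zero [Field K] [CharZero K] {A : Matrix ι ι K}
    (hA : IsIdempotentElem A) (htr : A.trace = 0) : A = 0 := by
  apply toLin'.injective
  rw [map_zero]
  exact LinearMap.IsIdempotentElem.eq_zero_of_trace_eq_zero (isIdempotentElem_toLin' hA)
    (by rwa [trace_toLin'_eq])

end Matrix

theorem RCLike.isEmbedding_natCast (𝕜 : Type*) [RCLike 𝕜] :
    Topology.IsEmbedding ((↑) : ℕ → 𝕜) := by
  have hcast : ((↑) : ℕ → 𝕜) = ((↑) : ℝ → 𝕜) ∘ ((↑) : ℕ → ℝ) :=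
    funext fun k => (RCLike.ofReal_natCast k).symm
  rw [hcast]
  exact RCLike.ofRealLI.isometry.isEmbedding.comp Nat.isClosedEmbedding_coe_real.isEmbedding

theorem trace_eq_of_continuous_of_isIdempotentElem {X ι 𝕜 : Type*} [TopologicalSpace X]
    [PreconnectedSpace X] [Fintype ι] [DecidableEq ι] [RCLike 𝕜] {p : X → Matrix ι ι 𝕜}
    (hp : Continuous p) (hidem : ∀ x, IsIdempotentElem (p x)) (x y : X) :
    (p x).trace = (p y).trace := by
  have hrank : Continuous fun x => (p x).rank := by
    rw [(RCLike.isEmbedding_natCast 𝕜).continuous_iff]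
    simp_rw [Function.comp_def, ← Matrix.trace_eq_rank_of_isIdempotentElem (hidem _)]
    exact hp.matrix_trace
  rw [Matrix.trace_eq_rank_of_isIdempotentElem (hidem x),
    Matrix.trace_eq_rank_of_isIdempotentElem (hidem y),
    PreconnectedSpace.constant inferInstance hrank]

theorem trace_cdiag {k m N : ℕ} (h : k * m = N) (blocks : Fin m → Mat k) :
    (cdiag h blocks).trace = ∑ i, (blocks i).trace := by
  rw [cdiag, Matrix.reindex_apply, ← Matrix.trace_blockDiagonal]
  exact Equiv.sum_comp (finProdFinEquiv.trans (finCongr h)).symm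
    (fun j => Matrix.blockDiagonal blocks j j)

theorem exists_trace_eq_of_mem_razakA {n a N : ℕ} {h : n * (a + 1) = N} {f : C(I01, Mat N)}
    (hf : f ∈ razakA n a h) :
    ∃ c : Mat n, (f 0).trace = a * c.trace ∧ (f 1).trace = (a + 1) * c.trace := by
  obtain ⟨c, hf0, hf1⟩ := hf
  refine ⟨c, ?_, ?_⟩
  · rw [hf0, trace_cdiag, Fin.sum_univ_castSucc]
    simp
  · rw [hf1, trace_cdiag]
    simp

theorem razak_building_block_no_nonzero_projections_general (n a : ℕ)
    (p : C(I01, Mat (n * (a + 1)))) (hp : p ∈ razakA n a rfl)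
    (hidem : p * p = p) : p = 0 := by
  obtain ⟨c, htr0, htr1⟩ := exists_trace_eq_of_mem_razakA hp
  have hidem_apply (t : I01) : IsIdempotentElem (p t) := congr($hidem t)
  have htr (t : I01) : (p t).trace = (p 0).trace :=
    trace_eq_of_continuous_of_isIdempotentElem p.continuous hidem_apply t 0
  have hc : c.trace = 0 := by linear_combination htr1.symm.trans ((htr 1).trans htr0)
  ext1 t
  exact Matrix.eq_zero_of_isIdempotentElem_of_trace_eq_zero (hidem_apply t)
    (by rw [htr, htr0, hc, mul_zero])

/-- The Razak building block `A(n,n')` contains no nonzero projections. -/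
theorem razak_building_block_no_nonzero_projections (n a : ℕ) (hn : 0 < n) (ha : 0 < a)
    (p : C(I01, Mat (n * (a + 1)))) (hp : p ∈ razakA n a rfl)
    (hsa : star p = p) (hidem : p * p = p) : p = 0 :=
  razak_building_block_no_nonzero_projections_general n a p hp hidem
end
end

section
/- For every positive integer k, the algebra of k×k matrices over the Razak building block A(n,n') is ⋆-isomorphic to the Razak building block A(kn, kn'): there exists a bijective ⋆-algebra homomorphism from M_k(A(n,n')) onto A(kn, (a+1)·kn). -/
open scoped Matrix.Norms.L2Operator ComplexOrder
open Filter MeasureTheory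

noncomputable section

/-!
Evaluating entrywise identifies `M_k(C([0,1], M_{n'}))` with `C([0,1], M_k(M_{n'}))`, and
regrouping the index set `k × (n × (a+1))` as `(k × n) × (a+1)` is a ⋆-isomorphism `M_k(M_{n'}) ≅ M_{kn'}`.
This regrouping turns a `k × k` matrix whose entries are `diag(c_{uv}^0, …, c_{uv}^a)` into
`diag(C^0, …, C^a)` with `C^b = (c_{uv}^b)_{u,v}`, so the boundary conditions defining `A(n,n')`
entrywise (with `c = c_{uv}`) become exactly those defining `A(kn,kn')` (with `c = (c_{uv})_{u,v}`).
-/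

namespace Matrix

variable {I J L R K : Type*} [Fintype I] [Fintype J] [Fintype L] [DecidableEq I] [DecidableEq J]
  [DecidableEq L] [CommSemiring K] [Semiring R] [StarRing R] [Algebra K R]

variable (I J R K) in
def compStarAlgEquiv : Matrix I I (Matrix J J R) ≃⋆ₐ[K] Matrix (I × J) (I × J) R where
  __ := compAlgEquiv I J R K
  map_smul' := map_smul (compAlgEquiv I J R K)
  map_star' M := by ext; simp

variable (R K) in
def reindexStarAlgEquiv (e : I ≃ J) : Matrix I I R ≃⋆ₐ[K] Matrix J J R where
  __ := reindexAlgEquiv K R e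
  map_smul' := map_smul (reindexAlgEquiv K R e)
  map_star' M := by simp [star_eq_conjTranspose]

variable (R K) in
def blockStarAlgEquiv (e : I × J ≃ L) : Matrix I I (Matrix J J R) ≃⋆ₐ[K] Matrix L L R :=
  (compStarAlgEquiv I J R K).trans (reindexStarAlgEquiv R K e)

@[simp]
theorem blockStarAlgEquiv_apply_apply (e : I × J ≃ L) (M : Matrix I I (Matrix J J R))
    (u v : I) (i j : J) : blockStarAlgEquiv R K e M (e (u, i)) (e (v, j)) = M u v i j := by
  simp [blockStarAlgEquiv, compStarAlgEquiv, reindexStarAlgEquiv]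

end Matrix

namespace StarAlgEquiv

variable {A B : Type*} [Ring A] [StarRing A] [Algebra ℂ A] [TopologicalSpace A]
  [IsTopologicalRing A] [ContinuousSMul ℂ A] [T2Space A] [FiniteDimensional ℂ A]
  [Ring B] [StarRing B] [Algebra ℂ B] [TopologicalSpace B]
  [IsTopologicalRing B] [ContinuousSMul ℂ B]

theorem continuous_of_finiteDimensional (ψ : A ≃⋆ₐ[ℂ] B) : Continuous ψ :=
  ψ.toAlgEquiv.toLinearEquiv.toLinearMap.continuous_of_finiteDimensional

variable [ContinuousStar A] [ContinuousStar B] [T2Space B] [FiniteDimensional ℂ B]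
  (X : Type*) [TopologicalSpace X]

def continuousMapCongr (ψ : A ≃⋆ₐ[ℂ] B) : C(X, A) ≃⋆ₐ[ℂ] C(X, B) :=
  ofStarAlgHom (ContinuousMap.compStarAlgHom X ψ.toStarAlgHom ψ.continuous_of_finiteDimensional)
    (ContinuousMap.compStarAlgHom X ψ.symm.toStarAlgHom ψ.symm.continuous_of_finiteDimensional)
    (by ext; exact ψ.symm_apply_apply _) (by ext; exact ψ.apply_symm_apply _)

@[simp]
theorem continuousMapCongr_apply (ψ : A ≃⋆ₐ[ℂ] B) (f : C(X, A)) (t : X) :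
    continuousMapCongr X ψ f t = ψ (f t) := rfl

end StarAlgEquiv

namespace ContinuousMap

variable {X m A K : Type*} [TopologicalSpace X] [Fintype m] [CommSemiring K]
  [TopologicalSpace A] [Semiring A] [IsTopologicalSemiring A] [StarRing A] [ContinuousStar A]
  [Algebra K A]

variable (X m A K) in
def matrixStarAlgEquiv : Matrix m m C(X, A) ≃⋆ₐ[K] C(X, Matrix m m A) where
  toFun M := ⟨fun t => M.map (· t), continuous_matrix fun i j => (M i j).continuous⟩
  invFun f := Matrix.of fun i j => ⟨fun t => f t i j, f.continuous.matrix_elem i j⟩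
  left_inv M := rfl
  right_inv f := rfl
  map_add' M N := by ext; simp
  map_mul' M N := by ext; simp [Matrix.mul_apply, ContinuousMap.sum_apply]
  map_smul' c M := by ext; simp
  map_star' M := by ext; simp

@[simp]
theorem matrixStarAlgEquiv_apply (M : Matrix m m C(X, A)) (t : X) :
    matrixStarAlgEquiv X m A K M t = M.map (· t) := rfl

end ContinuousMap

section

open Matrix

variable {k n a : ℕ}

variable (k n a) in
def blockIndexEquiv : Fin k × Fin (n * (a + 1)) ≃ Fin (k * n * (a + 1)) :=
  ((Equiv.refl (Fin k)).prodCongr finProdFinEquiv.symm).trans <|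
    (Equiv.prodAssoc (Fin k) (Fin n) (Fin (a + 1))).symm.trans <|
      (finProdFinEquiv.prodCongr (Equiv.refl (Fin (a + 1)))).trans finProdFinEquiv

theorem blockIndexEquiv_apply (u : Fin k) (s : Fin n) (b : Fin (a + 1)) :
    blockIndexEquiv k n a (u, finProdFinEquiv (s, b)) =
      finProdFinEquiv (finProdFinEquiv (u, s), b) := by
  simp [blockIndexEquiv]

theorem cdiag_apply {N m : ℕ} (blocks : Fin m → Mat N) (i j : Fin N) (b c : Fin m) :
    cdiag rfl blocks (finProdFinEquiv (i, b)) (finProdFinEquiv (j, c)) =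
      if b = c then blocks b i j else 0 := by
  simp [cdiag, blockDiagonal_apply]

theorem blockStarAlgEquiv_cdiag (B : Fin k → Fin k → Fin (a + 1) → Mat n) :
    blockStarAlgEquiv ℂ ℂ (blockIndexEquiv k n a) (of fun u v => cdiag rfl (B u v)) =
      cdiag rfl fun b => blockStarAlgEquiv ℂ ℂ finProdFinEquiv (of fun u v => B u v b) := by
  ext p q
  obtain ⟨⟨u, i⟩, rfl⟩ := (blockIndexEquiv k n a).surjective p
  obtain ⟨⟨s, b⟩, rfl⟩ := finProdFinEquiv.surjective i
  obtain ⟨⟨v, j⟩, rfl⟩ := (blockIndexEquiv k n a).surjective q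
  obtain ⟨⟨t, c⟩, rfl⟩ := finProdFinEquiv.surjective j
  rw [blockStarAlgEquiv_apply_apply, blockIndexEquiv_apply, blockIndexEquiv_apply,
    cdiag_apply, of_apply, cdiag_apply]
  split_ifs <;> simp

theorem blockStarAlgEquiv_eq_cdiag_iff (X : Matrix (Fin k) (Fin k) (Mat (n * (a + 1))))
    (D : Fin (a + 1) → Mat (k * n)) :
    blockStarAlgEquiv ℂ ℂ (blockIndexEquiv k n a) X = cdiag rfl D ↔
      ∀ u v, X u v =
        cdiag rfl fun b => (blockStarAlgEquiv ℂ ℂ finProdFinEquiv).symm (D b) u v := by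
  have hD : cdiag rfl D = blockStarAlgEquiv ℂ ℂ (blockIndexEquiv k n a) (of fun u v =>
      cdiag rfl fun b => (blockStarAlgEquiv ℂ ℂ finProdFinEquiv).symm (D b) u v) := by
    rw [blockStarAlgEquiv_cdiag]
    exact congrArg _ (funext fun b => (StarAlgEquiv.apply_symm_apply _ _).symm)
  rw [hD, EquivLike.apply_eq_iff_eq, ← Matrix.ext_iff]
  rfl

variable (k n a) in
def matrixRazakEquiv :
    Matrix (Fin k) (Fin k) C(I01, Mat (n * (a + 1))) ≃⋆ₐ[ℂ] C(I01, Mat (k * n * (a + 1))) :=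
  (ContinuousMap.matrixStarAlgEquiv I01 (Fin k) (Mat (n * (a + 1))) ℂ).trans
    (StarAlgEquiv.continuousMapCongr I01 (blockStarAlgEquiv ℂ ℂ (blockIndexEquiv k n a)))

theorem matrixRazakEquiv_apply (M : Matrix (Fin k) (Fin k) C(I01, Mat (n * (a + 1)))) (t : I01) :
    matrixRazakEquiv k n a M t = blockStarAlgEquiv ℂ ℂ (blockIndexEquiv k n a) (M.map (· t)) :=
  rfl

theorem matrixRazakEquiv_mem_razakA_iff
    (M : Matrix (Fin k) (Fin k) C(I01, Mat (n * (a + 1)))) :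
    matrixRazakEquiv k n a M ∈ razakA (k * n) a rfl ↔ ∀ u v, M u v ∈ razakA n a rfl := by
  simp only [razakA, Set.mem_ofPred_eq, matrixRazakEquiv_apply, blockStarAlgEquiv_eq_cdiag_iff,
    map_apply, apply_ite (blockStarAlgEquiv ℂ ℂ finProdFinEquiv).symm, map_zero, Matrix.ite_apply,
    Matrix.zero_apply]
  constructor
  · rintro ⟨C, h0, h1⟩ u v
    exact ⟨_, h0 u v, h1 u v⟩
  · intro h
    choose c h0 h1 using h
    exact ⟨blockStarAlgEquiv ℂ ℂ finProdFinEquiv (of c), by simpa using h0, by simpa using h1⟩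

end

theorem matrices_over_razak_building_block_general (n a k : ℕ) :
    ∃ Φ : Matrix (Fin k) (Fin k) C(I01, Mat (n * (a + 1))) → C(I01, Mat (k * n * (a + 1))),
      (∀ M N, (∀ i j, M i j ∈ razakA n a rfl) → (∀ i j, N i j ∈ razakA n a rfl) →
        Φ (M + N) = Φ M + Φ N) ∧
      (∀ (z : ℂ) (M), (∀ i j, M i j ∈ razakA n a rfl) → Φ (z • M) = z • Φ M) ∧
      (∀ M N, (∀ i j, M i j ∈ razakA n a rfl) → (∀ i j, N i j ∈ razakA n a rfl) →
        Φ (M * N) = Φ M * Φ N) ∧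
      (∀ M, (∀ i j, M i j ∈ razakA n a rfl) → Φ (star M) = star (Φ M)) ∧
      (∀ M, (∀ i j, M i j ∈ razakA n a rfl) → Φ M ∈ razakA (k * n) a rfl) ∧
      (∀ M N, (∀ i j, M i j ∈ razakA n a rfl) → (∀ i j, N i j ∈ razakA n a rfl) →
        Φ M = Φ N → M = N) ∧
      (∀ g ∈ razakA (k * n) a rfl, ∃ M, (∀ i j, M i j ∈ razakA n a rfl) ∧ Φ M = g) := by
  set Φ := matrixRazakEquiv k n a
  refine ⟨Φ, fun M N _ _ => map_add Φ M N, fun z M _ => map_smul Φ z M,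
    fun M N _ _ => map_mul Φ M N, fun M _ => map_star Φ M,
    fun M hM => (matrixRazakEquiv_mem_razakA_iff M).2 hM, fun M N _ _ h => Φ.injective h,
    fun g hg => ⟨Φ.symm g, ?_, Φ.apply_symm_apply g⟩⟩
  rwa [← matrixRazakEquiv_mem_razakA_iff, StarAlgEquiv.apply_symm_apply]

/-- `M_k(A(n,n'))` is ⋆-isomorphic to the Razak building block `A(kn, kn')`:
there is a map `Φ` which is a ⋆-algebra homomorphism on the `k × k` matrices with entries in
`A(n,n')` and restricts to a bijection from `M_k(A(n,n'))` onto `A(kn, (a+1)·kn)`. -/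
theorem matrices_over_razak_building_block (n a k : ℕ) (hn : 0 < n) (ha : 0 < a) (hk : 0 < k) :
    ∃ Φ : Matrix (Fin k) (Fin k) C(I01, Mat (n * (a + 1))) → C(I01, Mat (k * n * (a + 1))),
      (∀ M N, (∀ i j, M i j ∈ razakA n a rfl) → (∀ i j, N i j ∈ razakA n a rfl) →
        Φ (M + N) = Φ M + Φ N) ∧
      (∀ (z : ℂ) (M), (∀ i j, M i j ∈ razakA n a rfl) → Φ (z • M) = z • Φ M) ∧
      (∀ M N, (∀ i j, M i j ∈ razakA n a rfl) → (∀ i j, N i j ∈ razakA n a rfl) →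
        Φ (M * N) = Φ M * Φ N) ∧
      (∀ M, (∀ i j, M i j ∈ razakA n a rfl) → Φ (star M) = star (Φ M)) ∧
      (∀ M, (∀ i j, M i j ∈ razakA n a rfl) → Φ M ∈ razakA (k * n) a rfl) ∧
      (∀ M N, (∀ i j, M i j ∈ razakA n a rfl) → (∀ i j, N i j ∈ razakA n a rfl) →
        Φ M = Φ N → M = N) ∧
      (∀ g ∈ razakA (k * n) a rfl, ∃ M, (∀ i j, M i j ∈ razakA n a rfl) ∧ Φ M = g) :=
  matrices_over_razak_building_block_general n a k
end
end

section
/- For every closed two-sided ideal I of the Razak building block A(n,n') there exists a unique closed subset S ⊆ [0,1] satisfying (0 ∈ S if and only if 1 ∈ S) such that I = {f ∈ A(n,n') : f(x) = 0 for all x ∈ S}. -/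
open scoped Matrix.Norms.L2Operator ComplexOrder
open Filter MeasureTheory

noncomputable section

/-!
The zero set `S` of `I` is closed, and `0 ∈ S ↔ 1 ∈ S` because an element of `A(n,n')` vanishes
at `0` iff its block `c` is zero iff it vanishes at `1`. At a point `x ∉ S` the values of `I` form
a nonzero two-sided ideal of a simple matrix algebra (`M_{n'}` at interior points, `M_n` through
the block `c` at the endpoints), hence all of it. So an `f ∈ A(n,n')` vanishing on `S` agrees with
an element of `I` at each interior point, and with a single element of `I` at both endpoints.
As `I` is stable under multiplication by real functions taking equal values at `0` and `1`, a
partition of unity glues these into uniform approximations of `f`, so `f ∈ I` as `I` is closed. For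
uniqueness, if `T` is another such set and `x ∉ T`, a Urysohn function times
`t ↦ diag(1, …, 1, t)` lies in `A(n,n')`, vanishes on `T` and not at `x`.
-/

open Set

theorem PartitionOfUnity.IsSubordinate.apply_eq_zero {ι X : Type*} [TopologicalSpace X]
    {s : Set X} {ρ : PartitionOfUnity ι X s} {U : ι → Set X} (hρ : ρ.IsSubordinate U)
    {i : ι} {x : X} (hx : x ∉ U i) : ρ i x = 0 :=
  image_eq_zero_of_notMem_tsupport fun h => hx (hρ i h)

theorem PartitionOfUnity.IsSubordinate.apply_eq_one {ι X : Type*} [TopologicalSpace X]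
    {s : Set X} {ρ : PartitionOfUnity ι X s} {U : ι → Set X} (hρ : ρ.IsSubordinate U)
    {i : ι} {x : X} (hxs : x ∈ s) (hx : ∀ j ≠ i, x ∉ U j) : ρ i x = 1 := by
  rw [← ρ.sum_eq_one hxs, finsum_eq_single (ρ · x) i fun j hj => hρ.apply_eq_zero (hx j hj)]

theorem PartitionOfUnity.IsSubordinate.dist_finsum_smul_lt {ι X E : Type*} [TopologicalSpace X]
    [NormedAddCommGroup E] [NormedSpace ℝ E] {ρ : PartitionOfUnity ι X} {U : ι → Set X}
    (hρ : ρ.IsSubordinate U) {g : ι → X → E} {f : X → E} {ε : ℝ}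
    (hg : ∀ i, ∀ y ∈ U i, dist (g i y) (f y) < ε) (y : X) :
    dist (∑ᶠ i, ρ i y • g i y) (f y) < ε :=
  ρ.finsum_smul_mem_convex (mem_univ y) (fun i hi => hg i y (hρ i (subset_tsupport _ hi)))
    (convex_ball (f y) ε)

theorem ContinuousMap.mem_closure_of_forall_exists_apply_eq
    {X E : Type*} [TopologicalSpace X] [CompactSpace X] [T2Space X]
    [NormedAddCommGroup E] [NormedSpace ℝ E] {Z : Set X} (hZ : IsClosed Z)
    (M : AddSubmonoid C(X, E))
    (hM : ∀ (ψ : C(X, ℝ)) (c : ℝ), EqOn ψ (fun _ => c) Z → ∀ g ∈ M, ψ • g ∈ M)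
    {f : C(X, E)} (hfZ : ∃ g ∈ M, EqOn g f Z) (hf : ∀ x ∉ Z, ∃ g ∈ M, g x = f x) :
    f ∈ closure (M : Set C(X, E)) := by
  obtain ⟨g₀, hg₀M, hg₀f⟩ := hfZ
  have hf' : ∀ x, ∃ g ∈ M, x ∉ Z → g x = f x := by
    intro x
    by_cases hx : x ∈ Z
    · exact ⟨0, M.zero_mem, fun h => (h hx).elim⟩
    · obtain ⟨g, hgM, hgx⟩ := hf x hx
      exact ⟨g, hgM, fun _ => hgx⟩
  choose G hGM hGf using hf'
  -- `none` indexes a single approximant near all of `Z`; `some x` one near `x`, away from `Z`.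
  let H : Option X → C(X, E) := fun i => i.elim g₀ G
  have hHM : ∀ i, H i ∈ M := fun i => by cases i <;> simp [H, hg₀M, hGM]
  rw [Metric.mem_closure_iff]
  intro ε hε
  let U : Option X → Set X := fun i => {y | dist (H i y) (f y) < ε} \ i.elim ∅ fun _ => Z
  have hUo : ∀ i, IsOpen (U i) := fun i =>
    (isOpen_lt ((H i).continuous.dist f.continuous) continuous_const).sdiff
      (by cases i <;> simp [hZ])
  have hUcov : univ ⊆ ⋃ i, U i := by
    intro y _
    by_cases hy : y ∈ Z
    · exact mem_iUnion.2 ⟨none, by simp [U, H, hg₀f hy, hε]⟩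
    · exact mem_iUnion.2 ⟨some y, by simp [U, H, hGf y hy, hε, hy]⟩
  obtain ⟨ρ, hρU⟩ := PartitionOfUnity.exists_isSubordinate isClosed_univ U hUo hUcov
  have hρZ : ∀ i, ∃ c : ℝ, EqOn (ρ i) (fun _ => c) Z := by
    rintro (_ | x)
    · refine ⟨1, fun z hz => hρU.apply_eq_one (mem_univ z) ?_⟩
      rintro (_ | j) hj
      · exact (hj rfl).elim
      · simp [U, hz]
    · exact ⟨0, fun z hz => hρU.apply_eq_zero (by simp [U, hz])⟩
  set t := (ρ.locallyFinite.finite_nonempty_of_compact).toFinset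
  refine ⟨∑ i ∈ t, ρ i • H i,
    sum_mem fun i _ => (hρZ i).elim fun c hc => hM _ c hc _ (hHM i), ?_⟩
  rw [dist_comm, ContinuousMap.dist_lt_iff hε]
  intro y
  have hsum : (∑ i ∈ t, ρ i • H i) y = ∑ᶠ i, ρ i y • H i y := by
    rw [finsum_eq_sum_of_support_subset (s := t) _ fun i hi =>
      (Set.Finite.mem_toFinset _).2 ⟨y, left_ne_zero_of_smul hi⟩]
    simp
  exact hsum ▸ hρU.dist_finsum_smul_lt (fun i y hy => hy.1) y

theorem IsSimpleRing.forall_eq_zero_or_forall_mem {R : Type*} [Ring R] [IsSimpleRing R]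
    {J : Set R} (zero_mem : 0 ∈ J) (add_mem : ∀ {x y}, x ∈ J → y ∈ J → x + y ∈ J)
    (neg_mem : ∀ {x}, x ∈ J → -x ∈ J) (mul_mem_left : ∀ {x y}, y ∈ J → x * y ∈ J)
    (mul_mem_right : ∀ {x y}, x ∈ J → x * y ∈ J) : (∀ x ∈ J, x = 0) ∨ ∀ x, x ∈ J := by
  rcases eq_bot_or_eq_top (TwoSidedIdeal.mk' J zero_mem add_mem neg_mem mul_mem_left
    mul_mem_right) with h | h
  · exact .inl fun x hx => by simpa using (SetLike.ext_iff.1 h x).1 (by simpa using hx)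
  · exact .inr fun x => by simpa using (SetLike.ext_iff.1 h x).2 trivial

section cdiag

variable {k m N : ℕ} (h : k * m = N)

def cdiagRingHom : (Fin m → Mat k) →+* Mat N :=
  (Matrix.reindexAlgEquiv ℂ ℂ (finProdFinEquiv.trans (finCongr h))).toRingHom.comp
    (Matrix.blockDiagonalRingHom (Fin k) (Fin m) ℂ)

theorem coe_cdiagRingHom : ⇑(cdiagRingHom h) = cdiag h := rfl

theorem cdiag_injective : Function.Injective (cdiag h) :=
  (Matrix.reindex _ _).injective.comp Matrix.blockDiagonal_injective

@[simp]
theorem cdiag_eq_zero_iff {b : Fin m → Mat k} : cdiag h b = 0 ↔ b = 0 := by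
  rw [← coe_cdiagRingHom, map_eq_zero_iff _ (cdiag_injective h)]

@[simp]
theorem cdiag_zero : cdiag h (fun _ => 0) = 0 := map_zero (cdiagRingHom h)

theorem cdiag_smul {R : Type*} [Monoid R] [DistribMulAction R ℂ] (r : R) (b : Fin m → Mat k) :
    cdiag h (r • b) = r • cdiag h b := by
  rw [cdiag, cdiag, Matrix.blockDiagonal_smul]
  rfl

theorem continuous_cdiag : Continuous (cdiag h) :=
  continuous_id.matrix_blockDiagonal.matrix_reindex _ _

end cdiag

def ampliation (n a : ℕ) : Mat n →+* Mat (n * (a + 1)) :=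
  (cdiagRingHom rfl).comp (Pi.constRingHom (Fin (a + 1)) (Mat n))

theorem ampliation_apply (n a : ℕ) (c : Mat n) :
    ampliation n a c = cdiag rfl fun _ : Fin (a + 1) => c := rfl

section razakA

variable {n a : ℕ}

theorem zero_mem_razakA : (0 : C(I01, Mat (n * (a + 1)))) ∈ razakA n a rfl :=
  ⟨0, by simp, by simp⟩

theorem apply_zero_eq_of_mem_razakA {f g : C(I01, Mat (n * (a + 1)))}
    (hf : f ∈ razakA n a rfl) (hg : g ∈ razakA n a rfl) (h1 : f 1 = g 1) : f 0 = g 0 := by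
  obtain ⟨c, hf0, hf1⟩ := hf
  obtain ⟨d, hg0, hg1⟩ := hg
  have hcd : c = d := congrFun (cdiag_injective rfl (hf1.symm.trans (h1.trans hg1))) 0
  rw [hf0, hg0, hcd]

theorem apply_zero_eq_zero_iff_of_mem_razakA (ha : 0 < a) {f : C(I01, Mat (n * (a + 1)))}
    (hf : f ∈ razakA n a rfl) : f 0 = 0 ↔ f 1 = 0 := by
  refine ⟨fun h0 => ?_, apply_zero_eq_of_mem_razakA hf zero_mem_razakA⟩
  obtain ⟨c, hf0, hf1⟩ := hf
  have hc : c = 0 := by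
    have h0c : (if 0 < a then c else 0) = 0 :=
      congrFun ((cdiag_eq_zero_iff rfl).1 (hf0 ▸ h0)) ⟨0, a.succ_pos⟩
    simpa [ha] using h0c
  simp [hf1, hc]

theorem smul_const_mem_razakA (ψ : C(I01, ℝ)) (h0 : ψ 0 = 0) (h1 : ψ 1 = 0)
    (M : Mat (n * (a + 1))) : ψ • ContinuousMap.const I01 M ∈ razakA n a rfl :=
  ⟨0, by simp [h0], by simp [h1]⟩

theorem smul_mem_razakA {ψ : C(I01, ℝ)} (hψ : ψ 0 = ψ 1) {f : C(I01, Mat (n * (a + 1)))}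
    (hf : f ∈ razakA n a rfl) : ψ • f ∈ razakA n a rfl := by
  obtain ⟨c, hf0, hf1⟩ := hf
  refine ⟨ψ 0 • c, ?_, ?_⟩
  · rw [ContinuousMap.smul_apply', hf0, ← cdiag_smul]
    congr 1
    ext i : 1
    split_ifs <;> simp [*]
  · rw [ContinuousMap.smul_apply', hf1, ← cdiag_smul, hψ]
    rfl

def razakSection (n a : ℕ) (α : Mat n) : C(I01, Mat (n * (a + 1))) where
  toFun t := cdiag rfl fun i : Fin (a + 1) => if (i : ℕ) < a then α else ((t : ℝ) : ℂ) • α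
  continuous_toFun :=
    (continuous_cdiag rfl).comp (continuous_pi fun _ => by split_ifs <;> fun_prop)

theorem razakSection_apply (α : Mat n) (t : I01) :
    razakSection n a α t =
      cdiag rfl fun i : Fin (a + 1) => if (i : ℕ) < a then α else ((t : ℝ) : ℂ) • α := rfl

theorem razakSection_mem (α : Mat n) : razakSection n a α ∈ razakA n a rfl :=
  ⟨α, by simp [razakSection_apply], by simp [razakSection_apply]⟩

theorem razakSection_apply_one (α : Mat n) : razakSection n a α 1 = ampliation n a α := by
  simp [razakSection_apply, ampliation_apply]

theorem razakSection_one_apply_ne_zero (hn : 0 < n) (ha : 0 < a) (t : I01) :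
    razakSection n a 1 t ≠ 0 := by
  have : NeZero n := ⟨hn.ne'⟩
  rw [razakSection_apply, Ne, cdiag_eq_zero_iff]
  intro h
  simpa [ha] using congrFun h ⟨0, a.succ_pos⟩

theorem exists_mem_razakA_eqOn_zero_apply_ne_zero (hn : 0 < n) (ha : 0 < a)
    {T : Set I01} (hT : IsClosed T) (hT01 : (0 : I01) ∈ T ↔ (1 : I01) ∈ T) {x : I01} (hx : x ∉ T) :
    ∃ f ∈ razakA n a rfl, EqOn f 0 T ∧ f x ≠ 0 := by
  have h01 : IsClosed ({0, 1} : Set I01) := (Set.toFinite _).isClosed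
  have h0 : (0 : I01) ∈ ({0, 1} : Set I01) := by simp
  have h1 : (1 : I01) ∈ ({0, 1} : Set I01) := by simp
  obtain ⟨ψ, hψT, hψx, hψ01⟩ : ∃ ψ : C(I01, ℝ), EqOn ψ 0 T ∧ ψ x = 1 ∧ ψ 0 = ψ 1 := by
    by_cases hx01 : x ∈ ({0, 1} : Set I01)
    · have h01T : (0 : I01) ∉ T ∧ (1 : I01) ∉ T := by rcases hx01 with rfl | rfl <;> tauto
      have hdisj : Disjoint T {0, 1} := by simpa [Set.disjoint_insert_right] using h01T
      obtain ⟨ψ, hψT, hψ01, -⟩ := exists_continuous_zero_one_of_isClosed hT h01 hdisj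
      exact ⟨ψ, hψT, hψ01 hx01, (hψ01 h0).trans (hψ01 h1).symm⟩
    · obtain ⟨ψ, hψT, hψx, -⟩ := exists_continuous_zero_one_of_isClosed (hT.union h01)
        (isClosed_singleton (x := x)) (by simpa [hx] using hx01)
      exact ⟨ψ, fun y hy => hψT (.inl hy), hψx rfl,
        (hψT (.inr h0)).trans (hψT (.inr h1)).symm⟩
  exact ⟨ψ • razakSection n a 1, smul_mem_razakA hψ01 (razakSection_mem 1),
    fun y hy => by simp [hψT hy], by simp [hψx, razakSection_one_apply_ne_zero hn ha]⟩

end razakA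

section ideal

variable {n a : ℕ} {I : Submodule ℂ C(I01, Mat (n * (a + 1)))}

theorem smul_mem_of_apply_zero_eq_apply_one
    (hmul : ∀ f g, f ∈ I → g ∈ razakA n a rfl → f * g ∈ I ∧ g * f ∈ I)
    {ψ : C(I01, ℝ)} (hψ : ψ 0 = ψ 1) {g : C(I01, Mat (n * (a + 1)))} (hg : g ∈ I) :
    ψ • g ∈ I := by
  set ψ' := ψ - ContinuousMap.const I01 (ψ 0)
  have hdecomp : ψ • g = g * (ψ' • ContinuousMap.const I01 1) + ψ 0 • g := by
    ext t : 1
    simp [ψ', mul_sub, sub_smul]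
  rw [hdecomp]
  exact I.add_mem (hmul g _ hg (smul_const_mem_razakA ψ' (by simp [ψ']) (by simp [ψ', hψ]) 1)).1
    (I.smul_of_tower_mem _ hg)

theorem forall_apply_eq_zero_or_forall_exists_apply_eq
    (hn : 0 < n) (hmul : ∀ f g, f ∈ I → g ∈ razakA n a rfl → f * g ∈ I ∧ g * f ∈ I)
    {x : I01} (hx0 : x ≠ 0) (hx1 : x ≠ 1) :
    (∀ g ∈ I, g x = 0) ∨ ∀ M, ∃ g ∈ I, g x = M := by
  have : NeZero (n * (a + 1)) := ⟨by positivity⟩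
  obtain ⟨φ, hφ01, hφx, -⟩ := exists_continuous_zero_one_of_isClosed
    (Set.toFinite ({0, 1} : Set I01)).isClosed (isClosed_singleton (x := x)) (by simp [hx0, hx1])
  have hmem (M : Mat (n * (a + 1))) : φ • ContinuousMap.const I01 M ∈ razakA n a rfl :=
    smul_const_mem_razakA φ (hφ01 (by simp)) (hφ01 (by simp)) M
  have happ (M : Mat (n * (a + 1))) : (φ • ContinuousMap.const I01 M) x = M := by simp [hφx rfl]
  exact IsSimpleRing.forall_eq_zero_or_forall_mem (J := {M | ∃ g ∈ I, g x = M})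
    ⟨0, I.zero_mem, rfl⟩
    (by rintro _ _ ⟨g, hg, rfl⟩ ⟨g', hg', rfl⟩; exact ⟨g + g', I.add_mem hg hg', rfl⟩)
    (by rintro _ ⟨g, hg, rfl⟩; exact ⟨-g, I.neg_mem hg, rfl⟩)
    (by rintro M _ ⟨g, hg, rfl⟩; exact ⟨_, (hmul g _ hg (hmem M)).2, by simp [happ]⟩)
    (by rintro _ M ⟨g, hg, rfl⟩; exact ⟨_, (hmul g _ hg (hmem M)).1, by simp [happ]⟩)
    |>.imp (fun h g hg => h _ ⟨g, hg, rfl⟩) id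

theorem forall_apply_one_eq_zero_or_forall_exists_apply_one_eq
    (hn : 0 < n) (hsub : (I : Set C(I01, Mat (n * (a + 1)))) ⊆ razakA n a rfl)
    (hmul : ∀ f g, f ∈ I → g ∈ razakA n a rfl → f * g ∈ I ∧ g * f ∈ I) :
    (∀ g ∈ I, g 1 = 0) ∨ ∀ c, ∃ g ∈ I, g 1 = ampliation n a c := by
  have : NeZero n := ⟨hn.ne'⟩
  refine (IsSimpleRing.forall_eq_zero_or_forall_mem (J := {c | ∃ g ∈ I, g 1 = ampliation n a c})
    ⟨0, I.zero_mem, by simp⟩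
    (by rintro _ _ ⟨g, hg, hg1⟩ ⟨g', hg', hg'1⟩; exact ⟨g + g', I.add_mem hg hg', by simp [*]⟩)
    (by rintro _ ⟨g, hg, hg1⟩; exact ⟨-g, I.neg_mem hg, by simp [*]⟩)
    (by
      rintro α _ ⟨g, hg, hg1⟩
      exact ⟨_, (hmul g _ hg (razakSection_mem α)).2, by simp [hg1, razakSection_apply_one]⟩)
    (by
      rintro _ α ⟨g, hg, hg1⟩
      exact ⟨_, (hmul g _ hg (razakSection_mem α)).1, by simp [hg1, razakSection_apply_one]⟩)
    ).imp (fun h g hg => ?_) id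
  obtain ⟨c, -, hg1⟩ := hsub hg
  rw [hg1, ← ampliation_apply, h c ⟨g, hg, hg1⟩, map_zero]

theorem exists_mem_eqOn_zero_one (hn : 0 < n) (ha : 0 < a)
    (hsub : (I : Set C(I01, Mat (n * (a + 1)))) ⊆ razakA n a rfl)
    (hmul : ∀ f g, f ∈ I → g ∈ razakA n a rfl → f * g ∈ I ∧ g * f ∈ I)
    {f : C(I01, Mat (n * (a + 1)))} (hf : f ∈ razakA n a rfl)
    (hf1 : (∀ g ∈ I, g 1 = 0) → f 1 = 0) : ∃ g ∈ I, EqOn g f {0, 1} := by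
  rcases forall_apply_one_eq_zero_or_forall_exists_apply_one_eq hn hsub hmul with h | h
  · have hf0 : f 0 = 0 := (apply_zero_eq_zero_iff_of_mem_razakA ha hf).2 (hf1 h)
    exact ⟨0, I.zero_mem, by rintro _ (rfl | rfl) <;> simp [hf0, hf1 h]⟩
  · obtain ⟨c, -, hc⟩ := id hf
    obtain ⟨g, hg, hg1⟩ := h c
    have hgf : g 1 = f 1 := hg1.trans hc.symm
    have hgf0 : g 0 = f 0 := apply_zero_eq_of_mem_razakA (hsub hg) hf hgf
    exact ⟨g, hg, by rintro _ (rfl | rfl) <;> assumption⟩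

theorem mem_closure_of_forall_apply_eq_zero (hn : 0 < n) (ha : 0 < a)
    (hsub : (I : Set C(I01, Mat (n * (a + 1)))) ⊆ razakA n a rfl)
    (hmul : ∀ f g, f ∈ I → g ∈ razakA n a rfl → f * g ∈ I ∧ g * f ∈ I)
    {f : C(I01, Mat (n * (a + 1)))} (hf : f ∈ razakA n a rfl)
    (hfI : ∀ x, (∀ g ∈ I, g x = 0) → f x = 0) : f ∈ closure (I : Set C(I01, Mat (n * (a + 1)))) :=
  ContinuousMap.mem_closure_of_forall_exists_apply_eq (Set.toFinite {0, 1}).isClosed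
    (I.restrictScalars ℝ).toAddSubmonoid
    (fun _ _ hψ _ hg => smul_mem_of_apply_zero_eq_apply_one hmul
      ((hψ (by simp)).trans (hψ (by simp)).symm) hg)
    (exists_mem_eqOn_zero_one hn ha hsub hmul hf (hfI 1))
    fun x hx => by
      simp only [mem_insert_iff, mem_singleton_iff, not_or] at hx
      rcases forall_apply_eq_zero_or_forall_exists_apply_eq hn hmul hx.1 hx.2 with h | h
      · exact ⟨0, I.zero_mem, (hfI x h).symm⟩
      · exact h (f x)

end ideal

/-- every closed two-sided ideal of the Razak building block `A(n,n')` is the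
vanishing ideal of a unique closed subset `S ⊆ [0,1]` with `0 ∈ S ↔ 1 ∈ S`. -/
theorem razak_building_block_ideals (n a : ℕ) (hn : 0 < n) (ha : 0 < a)
    (Idl : Set C(I01, Mat (n * (a + 1))))
    (hsub : Idl ⊆ razakA n a rfl)
    (hclosed : IsClosed Idl)
    (hzero : (0 : C(I01, Mat (n * (a + 1)))) ∈ Idl)
    (hadd : ∀ f g, f ∈ Idl → g ∈ Idl → f + g ∈ Idl)
    (hsmul : ∀ (z : ℂ) (f), f ∈ Idl → z • f ∈ Idl)
    (hmul : ∀ f g, f ∈ Idl → g ∈ razakA n a rfl → f * g ∈ Idl ∧ g * f ∈ Idl) :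
    ∃! S : Set I01, IsClosed S ∧ ((0 : I01) ∈ S ↔ (1 : I01) ∈ S) ∧
      Idl = {f | f ∈ razakA n a rfl ∧ ∀ x ∈ S, f x = 0} := by
  let I : Submodule ℂ C(I01, Mat (n * (a + 1))) :=
    { carrier := Idl, add_mem' := hadd _ _, zero_mem' := hzero, smul_mem' := hsmul }
  let S : Set I01 := {x | ∀ g ∈ Idl, g x = 0}
  have hS : IsClosed S := by
    simp only [S, ofPred_forall]
    exact isClosed_biInter fun g _ => isClosed_eq g.continuous continuous_const
  refine ⟨S, ⟨hS, ?_, ?_⟩, fun T ⟨hT, hT01, hIT⟩ => ?_⟩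
  · exact forall₂_congr fun g hg => apply_zero_eq_zero_iff_of_mem_razakA ha (hsub hg)
  · refine Set.ext fun f => ⟨fun hf => ⟨hsub hf, fun x hx => hx f hf⟩, fun ⟨hfA, hfS⟩ => ?_⟩
    exact hclosed.closure_subset
      (mem_closure_of_forall_apply_eq_zero (I := I) hn ha hsub hmul hfA hfS)
  · refine Set.ext fun x => ⟨fun hxT g hg => (hIT ▸ hg).2 x hxT, fun hxS => by_contra fun hxT => ?_⟩
    obtain ⟨f, hfA, hfT, hfx⟩ := exists_mem_razakA_eqOn_zero_apply_ne_zero hn ha hT hT01 hxT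
    exact hfx (hxS f (hIT ▸ ⟨hfA, hfT⟩))
end
end

section
/- Let n₁ and a be positive integers, set b = 2a+1, n₂ = b·n₁ and m = 2b, and define ξ_k : [0,1] → [0,1] by ξ_k(x) = x/2 for 1 ≤ k ≤ b, ξ_{b+1}(x) = 1/2 for all x, and ξ_k(x) = (x+1)/2 for b+2 ≤ k ≤ 2b. Then there exists a continuous map u from [0,1] into the unitary group of M_{(b+1)·n₂}(ℂ) such that the map φ defined by φ(f)(x) = u(x)·diag(f(ξ₁(x)), …, f(ξ_m(x)))·u(x)* sends A(n₁,(a+1)·n₁) into A(n₂,(b+1)·n₂), and the resulting map φ : A(n₁,(a+1)·n₁) → A(n₂,(b+1)·n₂) is an injective ⋆-algebra homomorphism. Moreover every ξ_k satisfies |ξ_k(x) − ξ_k(y)| ≤ 1/2 for all x, y ∈ [0,1], and the union of the images ξ₁([0,1]) ∪ … ∪ ξ_m([0,1]) equals [0,1]. -/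
open scoped Matrix.Norms.L2Operator ComplexOrder
open Filter MeasureTheory

noncomputable section

/-!
At the endpoints, `diag(f(ξ_1(x)), …, f(ξ_m(x)))` consists of the blocks of an element of
`A(n₂, (b+1)n₂)` in another order. With `f(0) = diag(c, …, c, 0)` and `F = f(1/2)`, at `x = 0` there
are `b` copies of `diag(c, …, c, 0)` and `b` copies of `F`, at `x = 1` there are `b + 1` copies of
`F` and `2a` copies of `diag(c, …, c)`; both rearrange into `diag(C, …, C, 0)` resp. `diag(C, …, C)`
with `C = diag(F, c, …, c)`. So conjugation by suitable permutation matrices at `0` and `1` lands in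
the target algebra, and these permutation matrices are joined by a path of unitaries, since every
swap matrix is a self-adjoint unitary and hence joined to `1`. Pointwise unitary conjugation of a
block-diagonal ⋆-homomorphism is a ⋆-homomorphism, injective because the `ξ_k` cover `[0,1]`.
-/

namespace Razak

open Matrix

section BlockDiagonal

variable {k m N : ℕ} (h : k * m = N)

-- `cdiag` interleaves its blocks: entry `i` of block `j` sits at position `j + m * i`.
def cdiagEquiv : Fin k × Fin m ≃ Fin N := finProdFinEquiv.trans (finCongr h)

lemma cdiag_eq_submatrix (M : Fin m → Mat k) :
    cdiag h M = (blockDiagonal M).submatrix (cdiagEquiv h).symm (cdiagEquiv h).symm := rfl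

@[simp]
lemma cdiag_apply_cdiagEquiv (M : Fin m → Mat k) (p q : Fin k × Fin m) :
    cdiag h M (cdiagEquiv h p) (cdiagEquiv h q) = blockDiagonal M p q := by
  simp [cdiag_eq_submatrix]

lemma cdiag_add (M M' : Fin m → Mat k) : cdiag h (M + M') = cdiag h M + cdiag h M' := by
  simp [cdiag_eq_submatrix, blockDiagonal_add, submatrix_add]

lemma cdiag_smul (z : ℂ) (M : Fin m → Mat k) : cdiag h (z • M) = z • cdiag h M := by
  simp [cdiag_eq_submatrix, blockDiagonal_smul, submatrix_smul]

lemma cdiag_mul (M M' : Fin m → Mat k) : cdiag h (M * M') = cdiag h M * cdiag h M' := by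
  simp [cdiag_eq_submatrix, submatrix_mul_equiv, Pi.mul_def, blockDiagonal_mul]

lemma cdiag_star (M : Fin m → Mat k) : cdiag h (star M) = star (cdiag h M) := by
  simp [cdiag_eq_submatrix, star_eq_conjTranspose, conjTranspose_submatrix, Pi.star_def]

lemma cdiag_injective : Function.Injective (cdiag h) := fun _ _ hM =>
  blockDiagonal_injective <| (reindex _ _).injective hM

lemma continuous_cdiag {X : Type*} [TopologicalSpace X] {M : X → Fin m → Mat k}
    (hM : Continuous M) : Continuous fun x => cdiag h (M x) :=
  (continuous_id.matrix_blockDiagonal.comp hM).matrix_submatrix _ _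

end BlockDiagonal

section BlockReindex

variable {p q m p' q' m' N : ℕ} (h : p * q * m = N) (h' : p' * q' * m' = N)

def blockReindexPerm (g : (Fin p × Fin q) × Fin m ≃ (Fin p' × Fin q') × Fin m') :
    Equiv.Perm (Fin N) :=
  (cdiagEquiv h).symm.trans <| ((cdiagEquiv rfl).symm.prodCongr (Equiv.refl _)).trans <|
    g.trans <| ((cdiagEquiv rfl).prodCongr (Equiv.refl _)).trans (cdiagEquiv h')

lemma blockReindexPerm_cdiagEquiv (g : (Fin p × Fin q) × Fin m ≃ (Fin p' × Fin q') × Fin m')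
    (x : Fin p × Fin q) (i : Fin m) :
    blockReindexPerm h h' g (cdiagEquiv h (cdiagEquiv rfl x, i)) =
      cdiagEquiv h' (cdiagEquiv rfl (g (x, i)).1, (g (x, i)).2) := by
  simp [blockReindexPerm, Prod.map]

lemma exists_cdiagEquiv_cdiagEquiv_eq (P : Fin N) :
    ∃ (x : Fin p × Fin q) (i : Fin m), cdiagEquiv h (cdiagEquiv rfl x, i) = P :=
  let ⟨⟨x, i⟩, hx⟩ :=
    (((cdiagEquiv rfl).prodCongr (Equiv.refl _)).trans (cdiagEquiv h)).surjective P
  ⟨x, i, hx⟩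

end BlockReindex

section EndpointPermutations

variable (n a : ℕ)

/-- `C = diag(F, c, …, c)` with `a` copies of `c`, in the interleaved layout of `cdiag`: the block
of `φ(f)(0) = diag(C, …, C, 0)` and `φ(f)(1) = diag(C, …, C)`, where `F = f(1/2)` and
`f(0) = diag(c, …, c, 0)`. -/
def cornerBlock (F : Mat (n * (a + 1))) (c : Mat n) : Mat (n * (2 * a + 1)) :=
  (Matrix.of fun (p q : Fin n × Fin (2 * a + 1)) =>
    if hp : (p.2 : ℕ) < a + 1 then
      if hq : (q.2 : ℕ) < a + 1 then
        F (cdiagEquiv rfl (p.1, ⟨p.2, hp⟩)) (cdiagEquiv rfl (q.1, ⟨q.2, hq⟩))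
      else 0
    else if (q.2 : ℕ) < a + 1 then 0
    else if p.2 = q.2 then c p.1 q.1 else 0).submatrix
    (cdiagEquiv rfl).symm (cdiagEquiv rfl).symm

@[simp]
lemma cornerBlock_apply (F : Mat (n * (a + 1))) (c : Mat n) (p q : Fin n × Fin (2 * a + 1)) :
    cornerBlock n a F c (cdiagEquiv rfl p) (cdiagEquiv rfl q) =
      if hp : (p.2 : ℕ) < a + 1 then
        if hq : (q.2 : ℕ) < a + 1 then
          F (cdiagEquiv rfl (p.1, ⟨p.2, hp⟩)) (cdiagEquiv rfl (q.1, ⟨q.2, hq⟩))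
        else 0
      else if (q.2 : ℕ) < a + 1 then 0
      else if p.2 = q.2 then c p.1 q.1 else 0 := by
  simp [cornerBlock]

/- Sends row `r` of slot `s` of target block `K` to its source position (`b = 2a + 1`). At
`x = 0` the source blocks are `b` copies of `diag(c, …, c, 0)` followed by `b` copies of `F`. For
`K < b` the `F` part (`s ≤ a`) of `C` comes from source block `b + K` and its `c` slots from source
block `K`; the zero block `K = b` is made of the zero slots of the first `b` source blocks. -/
def indexAtZero (x : (Fin n × Fin (2 * a + 1)) × Fin (2 * a + 1 + 1)) :
    (Fin n × Fin (a + 1)) × Fin (2 * (2 * a + 1)) :=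
  let ⟨⟨r, s⟩, K⟩ := x
  if hK : (K : ℕ) < 2 * a + 1 then
    if hs : (s : ℕ) < a + 1 then ((r, ⟨s, hs⟩), ⟨K + (2 * a + 1), by omega⟩)
    else ((r, ⟨s - (a + 1), by omega⟩), ⟨K, by omega⟩)
  else ((r, ⟨a, by omega⟩), ⟨s, by omega⟩)

/- At `x = 1` the source blocks are `b + 1` copies of `F` followed by `2a` copies of
`diag(c, …, c)` with `a + 1` slots each. The `F` part of target block `K` is source block `K`; the
`c` slot `s - (a + 1)` of target block `K` fills slot `K mod (a + 1)` of one of the last `2a`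
source blocks. -/
def indexAtOne (x : (Fin n × Fin (2 * a + 1)) × Fin (2 * a + 1 + 1)) :
    (Fin n × Fin (a + 1)) × Fin (2 * (2 * a + 1)) :=
  let ⟨⟨r, s⟩, K⟩ := x
  if hs : (s : ℕ) < a + 1 then ((r, ⟨s, hs⟩), ⟨K, by omega⟩)
  else if hK : (K : ℕ) < a + 1 then ((r, ⟨K, hK⟩), ⟨2 * a + 2 + (s - (a + 1)), by omega⟩)
  else ((r, ⟨K - (a + 1), by omega⟩), ⟨3 * a + 2 + (s - (a + 1)), by omega⟩)

def indexEquivAtZero :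
    (Fin n × Fin (2 * a + 1)) × Fin (2 * a + 1 + 1) ≃
      (Fin n × Fin (a + 1)) × Fin (2 * (2 * a + 1)) :=
  Equiv.ofBijective (indexAtZero n a) <| (Fintype.bijective_iff_injective_and_card _).2
    ⟨by
      rintro ⟨⟨r, s⟩, K⟩ ⟨⟨r', s'⟩, K'⟩ h
      simp only [indexAtZero] at h
      split_ifs at h <;> simp only [Prod.mk.injEq, Fin.ext_iff] at h ⊢ <;> omega,
    by simp only [Fintype.card_prod, Fintype.card_fin]; ring⟩

def indexEquivAtOne :
    (Fin n × Fin (2 * a + 1)) × Fin (2 * a + 1 + 1) ≃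
      (Fin n × Fin (a + 1)) × Fin (2 * (2 * a + 1)) :=
  Equiv.ofBijective (indexAtOne n a) <| (Fintype.bijective_iff_injective_and_card _).2
    ⟨by
      rintro ⟨⟨r, s⟩, K⟩ ⟨⟨r', s'⟩, K'⟩ h
      simp only [indexAtOne] at h
      split_ifs at h <;> simp only [Prod.mk.injEq, Fin.ext_iff] at h ⊢ <;> omega,
    by simp only [Fintype.card_prod, Fintype.card_fin]; ring⟩

variable {n a}
variable (hN : n * (2 * a + 1) * (2 * a + 1 + 1) = n * (a + 1) * (2 * (2 * a + 1)))
  (F : Mat (n * (a + 1))) (c : Mat n)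

lemma cdiag_submatrix_indexEquivAtZero :
    (cdiag rfl fun k : Fin (2 * (2 * a + 1)) =>
        if (k : ℕ) < 2 * a + 1 then cdiag rfl (fun i : Fin (a + 1) => if (i : ℕ) < a then c else 0)
        else F).submatrix (blockReindexPerm hN rfl (indexEquivAtZero n a))
        (blockReindexPerm hN rfl (indexEquivAtZero n a)) =
      cdiag hN fun K : Fin (2 * a + 1 + 1) =>
        if (K : ℕ) < 2 * a + 1 then cornerBlock n a F c else 0 := by
  ext P Q
  obtain ⟨⟨r, s⟩, K, rfl⟩ := exists_cdiagEquiv_cdiagEquiv_eq hN P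
  obtain ⟨⟨r', s'⟩, L, rfl⟩ := exists_cdiagEquiv_cdiagEquiv_eq hN Q
  simp only [submatrix_apply, blockReindexPerm_cdiagEquiv, cdiag_apply_cdiagEquiv,
    blockDiagonal_apply, indexEquivAtZero, Equiv.ofBijective_apply, indexAtZero]
  split_ifs <;> simp only [cdiag_apply_cdiagEquiv, blockDiagonal_apply, Matrix.zero_apply,
    cornerBlock_apply] <;> (try split_ifs) <;> simp only [Fin.ext_iff] at * <;> first | rfl | omega

lemma cdiag_submatrix_indexEquivAtOne :
    (cdiag rfl fun k : Fin (2 * (2 * a + 1)) =>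
        if (k : ℕ) < 2 * a + 1 + 1 then F else cdiag rfl (fun _ : Fin (a + 1) => c)).submatrix
        (blockReindexPerm hN rfl (indexEquivAtOne n a))
        (blockReindexPerm hN rfl (indexEquivAtOne n a)) =
      cdiag hN fun _ : Fin (2 * a + 1 + 1) => cornerBlock n a F c := by
  ext P Q
  obtain ⟨⟨r, s⟩, K, rfl⟩ := exists_cdiagEquiv_cdiagEquiv_eq hN P
  obtain ⟨⟨r', s'⟩, L, rfl⟩ := exists_cdiagEquiv_cdiagEquiv_eq hN Q
  simp only [submatrix_apply, blockReindexPerm_cdiagEquiv, cdiag_apply_cdiagEquiv,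
    blockDiagonal_apply, indexEquivAtOne, Equiv.ofBijective_apply, indexAtOne]
  split_ifs <;> simp only [cdiag_apply_cdiagEquiv, blockDiagonal_apply,
    cornerBlock_apply] <;> (try split_ifs) <;> simp only [Fin.ext_iff] at * <;> first | rfl | omega

end EndpointPermutations

section UnitaryPaths

lemma smul_one_add_smul_mul_smul_one_add_smul {A : Type*} [Ring A] [Algebra ℂ A] {T : A}
    (hT : T * T = 1) (α β γ δ : ℂ) :
    (α • 1 + β • T) * (γ • 1 + δ • T) = (α * γ + β * δ) • 1 + (α * δ + β * γ) • T := by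
  simp only [add_mul, mul_add, smul_mul_smul_comm, one_mul, mul_one, hT, add_smul]
  abel

variable {A : Type*} [Ring A] [StarRing A] [Algebra ℂ A] [StarModule ℂ A]

-- This is `1` on the `1`-eigenspace of `T` and `z` on its `-1`-eigenspace.
lemma smul_one_add_smul_mem_unitary {T : A} (hT : IsSelfAdjoint T) (hT2 : T * T = 1) {z : ℂ}
    (hz : star z * z = 1) : ((1 + z) / 2) • 1 + ((1 - z) / 2) • T ∈ unitary A := by
  have hstar : star (((1 + z) / 2) • (1 : A) + ((1 - z) / 2) • T)
      = ((1 + star z) / 2) • 1 + ((1 - star z) / 2) • T := by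
    simp [star_add, star_smul, hT.star_eq]
  have hz' : z * star z = 1 := by rw [mul_comm, hz]
  rw [Unitary.mem_iff, hstar, smul_one_add_smul_mul_smul_one_add_smul hT2,
    smul_one_add_smul_mul_smul_one_add_smul hT2]
  constructor
  · rw [show (1 + star z) / 2 * ((1 + z) / 2) + (1 - star z) / 2 * ((1 - z) / 2) = 1 by
      linear_combination hz / 2,
      show (1 + star z) / 2 * ((1 - z) / 2) + (1 - star z) / 2 * ((1 + z) / 2) = 0 by
      linear_combination -hz / 2]
    simp
  · rw [show (1 + z) / 2 * ((1 + star z) / 2) + (1 - z) / 2 * ((1 - star z) / 2) = 1 by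
      linear_combination hz' / 2,
      show (1 + z) / 2 * ((1 - star z) / 2) + (1 - z) / 2 * ((1 + star z) / 2) = 0 by
      linear_combination -hz' / 2]
    simp

lemma joinedIn_unitary_one_of_mul_self_eq_one [TopologicalSpace A] [IsTopologicalRing A]
    [ContinuousSMul ℂ A] {T : A} (hT : IsSelfAdjoint T) (hT2 : T * T = 1) :
    JoinedIn (unitary A) 1 T := by
  let z : ℝ → ℂ := fun t => Complex.exp (Real.pi * t * Complex.I)
  refine JoinedIn.ofLine (f := fun t => ((1 + z t) / 2) • (1 : A) + ((1 - z t) / 2) • T)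
    (by fun_prop) (by simp [z]) (by simp [z, Complex.exp_pi_mul_I]) ?_
  rintro _ ⟨t, -, rfl⟩
  refine smul_one_add_smul_mem_unitary hT hT2 ?_
  rw [Complex.star_def, mul_comm, Complex.mul_conj, Complex.normSq_eq_norm_sq]
  simp [z, ← Complex.ofReal_mul, Complex.norm_exp_ofReal_mul_I]

end UnitaryPaths

section PermMatrix

variable {ι : Type*} [Fintype ι] [DecidableEq ι]

lemma permMatrix_mul_mul_star (σ : Equiv.Perm ι) (D : Matrix ι ι ℂ) :
    σ.permMatrix ℂ * D * star (σ.permMatrix ℂ) = D.submatrix σ σ := by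
  rw [star_eq_conjTranspose, conjTranspose_permMatrix, PEquiv.toMatrix_toPEquiv_mul,
    PEquiv.mul_toMatrix_toPEquiv]
  rfl

lemma joinedIn_unitaryGroup_one_permMatrix (σ : Equiv.Perm ι) :
    JoinedIn (unitaryGroup ι ℂ) 1 (σ.permMatrix ℂ) := by
  induction σ using Equiv.Perm.swap_induction_on with
  | one => simpa using JoinedIn.refl (one_mem (unitaryGroup ι ℂ))
  | swap_mul f x y _ ih =>
    have hswap : JoinedIn (unitaryGroup ι ℂ) 1 ((Equiv.swap x y).permMatrix ℂ) :=
      joinedIn_unitary_one_of_mul_self_eq_one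
        (by rw [IsSelfAdjoint, star_eq_conjTranspose, conjTranspose_permMatrix, Equiv.swap_inv])
        (by rw [← permMatrix_mul, Equiv.swap_mul_self, permMatrix_one])
    simpa only [permMatrix_mul, one_mul, Submonoid.coe_mul_self_eq] using ih.mul hswap

end PermMatrix

section ConnectingMap

variable {X Y : Type*} [TopologicalSpace X] [TopologicalSpace Y] {k m N : ℕ} (h : k * m = N)

def connectingMap (u : C(X, Mat N)) (ξ : Fin m → C(X, Y)) (f : C(Y, Mat k)) : C(X, Mat N) where
  toFun x := u x * cdiag h (fun i => f (ξ i x)) * star (u x)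
  continuous_toFun := (u.continuous.mul <| continuous_cdiag h <|
    continuous_pi fun i => f.continuous.comp (ξ i).continuous).mul u.continuous.star

variable {u : C(X, Mat N)} {ξ : Fin m → C(X, Y)}

@[simp]
lemma connectingMap_apply (f : C(Y, Mat k)) (x : X) :
    connectingMap h u ξ f x = u x * cdiag h (fun i => f (ξ i x)) * star (u x) := rfl

lemma connectingMap_add (f g : C(Y, Mat k)) :
    connectingMap h u ξ (f + g) = connectingMap h u ξ f + connectingMap h u ξ g := by
  ext1 x
  simp only [connectingMap_apply, ContinuousMap.add_apply]
  rw [← Pi.add_def, cdiag_add, mul_add, add_mul]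

lemma connectingMap_smul (z : ℂ) (f : C(Y, Mat k)) :
    connectingMap h u ξ (z • f) = z • connectingMap h u ξ f := by
  ext1 x
  simp only [connectingMap_apply, ContinuousMap.smul_apply]
  rw [← Pi.smul_def, cdiag_smul, mul_smul_comm, smul_mul_assoc]

lemma connectingMap_apply_eq_conjStarAlgAut (hu : ∀ x, u x ∈ unitaryGroup (Fin N) ℂ)
    (f : C(Y, Mat k)) (x : X) :
    connectingMap h u ξ f x =
      Unitary.conjStarAlgAut ℂ (Mat N) ⟨u x, hu x⟩ (cdiag h fun i => f (ξ i x)) := rfl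

lemma connectingMap_mul (hu : ∀ x, u x ∈ unitaryGroup (Fin N) ℂ) (f g : C(Y, Mat k)) :
    connectingMap h u ξ (f * g) = connectingMap h u ξ f * connectingMap h u ξ g := by
  ext1 x
  simp only [connectingMap_apply_eq_conjStarAlgAut h hu, ContinuousMap.mul_apply]
  rw [← Pi.mul_def, cdiag_mul, map_mul]

lemma connectingMap_star (hu : ∀ x, u x ∈ unitaryGroup (Fin N) ℂ) (f : C(Y, Mat k)) :
    connectingMap h u ξ (star f) = star (connectingMap h u ξ f) := by
  ext1 x
  simp only [connectingMap_apply_eq_conjStarAlgAut h hu, ContinuousMap.star_apply]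
  rw [← Pi.star_def, cdiag_star, map_star]

lemma connectingMap_injective (hu : ∀ x, u x ∈ unitaryGroup (Fin N) ℂ)
    (hξ : ⋃ i, Set.range (ξ i) = Set.univ) : Function.Injective (connectingMap h u ξ) := by
  intro f g hfg
  ext1 y
  obtain ⟨i, x, rfl⟩ := Set.mem_iUnion.1 (Set.eq_univ_iff_forall.1 hξ y)
  have hx := DFunLike.congr_fun hfg x
  rw [connectingMap_apply_eq_conjStarAlgAut h hu, connectingMap_apply_eq_conjStarAlgAut h hu] at hx
  exact congrFun (cdiag_injective h ((Unitary.conjStarAlgAut ℂ (Mat N) _).injective hx)) i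

end ConnectingMap

section Reparametrization

-- `ξ_{k+1}` of the statement (indices counted from `0`), on all of `ℝ`.
def razakXi (b k : ℕ) (x : ℝ) : ℝ :=
  if k < b then x / 2 else if k = b then 1 / 2 else (x + 1) / 2

def half : I01 := ⟨1 / 2, by norm_num, by norm_num⟩

variable {b : ℕ} {ξ : Fin (2 * b) → I01 → I01}

lemma continuous_of_coe_eq_razakXi (hξ : ∀ k x, (ξ k x : ℝ) = razakXi b k x)
    (k : Fin (2 * b)) : Continuous (ξ k) := by
  refine continuous_induced_rng.2 ?_
  rw [show ((↑) ∘ ξ k : I01 → ℝ) = fun x : I01 => razakXi b k x from funext (hξ k)]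
  unfold razakXi
  split_ifs <;> fun_prop

lemma abs_sub_le_of_coe_eq_razakXi (hξ : ∀ k x, (ξ k x : ℝ) = razakXi b k x)
    (k : Fin (2 * b)) (x y : I01) : |(ξ k x : ℝ) - (ξ k y : ℝ)| ≤ 1 / 2 := by
  have := x.2; have := y.2
  simp only [Set.mem_Icc] at *
  rw [hξ, hξ, abs_le]
  unfold razakXi
  split_ifs <;> constructor <;> linarith

lemma iUnion_range_of_coe_eq_razakXi (hξ : ∀ k x, (ξ k x : ℝ) = razakXi b k x) (hb : 2 ≤ b) :
    ⋃ k, Set.range (ξ k) = Set.univ := by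
  refine Set.eq_univ_of_forall fun y => Set.mem_iUnion.2 ?_
  obtain ⟨hy₀, hy₁⟩ := y.2
  rcases le_or_gt (y : ℝ) (1 / 2) with hy | hy
  · refine ⟨⟨0, by omega⟩, ⟨2 * y, by linarith, by linarith⟩, Subtype.ext ?_⟩
    rw [hξ, razakXi, if_pos (by simp; omega)]
    ring
  · refine ⟨⟨2 * b - 1, by omega⟩, ⟨2 * y - 1, by linarith, by linarith⟩, Subtype.ext ?_⟩
    rw [hξ, razakXi, if_neg (by simp; omega), if_neg (by simp; omega)]
    ring

lemma apply_zero_of_coe_eq_razakXi (hξ : ∀ k x, (ξ k x : ℝ) = razakXi b k x)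
    (k : Fin (2 * b)) : ξ k 0 = if (k : ℕ) < b then 0 else half := by
  apply Subtype.ext
  rw [hξ, razakXi]
  split_ifs <;> first | omega | simp [half]

lemma apply_one_of_coe_eq_razakXi (hξ : ∀ k x, (ξ k x : ℝ) = razakXi b k x)
    (k : Fin (2 * b)) : ξ k 1 = if (k : ℕ) < b + 1 then half else 1 := by
  apply Subtype.ext
  rw [hξ, razakXi]
  split_ifs <;> first | omega | simp [half]

end Reparametrization

end Razak

open Razak in
/-- existence of the standard-form connecting map
`φ : A(n₁, (a+1)n₁) → A(n₂, (b+1)n₂)` (with `b = 2a+1`, `n₂ = b·n₁`, `m = 2b`) given by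
`φ(f)(x) = u(x)·diag(f(ξ₁(x)), …, f(ξ_m(x)))·u(x)*`, which is an injective ⋆-algebra
homomorphism; moreover each `ξ_k` has variation at most `1/2` and the images of the `ξ_k`
cover `[0,1]`. -/
theorem razak_connecting_map_exists (n₁ a : ℕ) (ha : 0 < a)
    (ξ : Fin (2 * (2 * a + 1)) → I01 → I01)
    (hξ : ∀ (k : Fin (2 * (2 * a + 1))) (x : I01),
      ((ξ k x : ℝ)) = if (k : ℕ) < 2 * a + 1 then (x : ℝ) / 2
        else if (k : ℕ) = 2 * a + 1 then 1 / 2 else ((x : ℝ) + 1) / 2) :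
    ∃ u : C(I01, Mat (n₁ * (a + 1) * (2 * (2 * a + 1)))),
      (∀ x : I01, u x ∈ Matrix.unitaryGroup (Fin (n₁ * (a + 1) * (2 * (2 * a + 1)))) ℂ) ∧
      ∃ Φ : C(I01, Mat (n₁ * (a + 1))) → C(I01, Mat (n₁ * (a + 1) * (2 * (2 * a + 1)))),
        (∀ (f : C(I01, Mat (n₁ * (a + 1)))) (x : I01),
          Φ f x = u x * cdiag rfl (fun k => f (ξ k x)) * star (u x)) ∧
        (∀ f ∈ razakA n₁ a rfl,
          Φ f ∈ razakA (n₁ * (2 * a + 1)) (2 * a + 1)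
            (show n₁ * (2 * a + 1) * (2 * a + 1 + 1) = n₁ * (a + 1) * (2 * (2 * a + 1))
              by ring)) ∧
        (∀ f g, f ∈ razakA n₁ a rfl → g ∈ razakA n₁ a rfl → Φ (f + g) = Φ f + Φ g) ∧
        (∀ (z : ℂ) (f), f ∈ razakA n₁ a rfl → Φ (z • f) = z • Φ f) ∧
        (∀ f g, f ∈ razakA n₁ a rfl → g ∈ razakA n₁ a rfl → Φ (f * g) = Φ f * Φ g) ∧
        (∀ f, f ∈ razakA n₁ a rfl → Φ (star f) = star (Φ f)) ∧
        (∀ f g, f ∈ razakA n₁ a rfl → g ∈ razakA n₁ a rfl → Φ f = Φ g → f = g) ∧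
        (∀ (k : Fin (2 * (2 * a + 1))) (x y : I01), |(ξ k x : ℝ) - (ξ k y : ℝ)| ≤ 1 / 2) ∧
        (⋃ k, Set.range (ξ k)) = (Set.univ : Set I01) := by
  have hN : n₁ * (2 * a + 1) * (2 * a + 1 + 1) = n₁ * (a + 1) * (2 * (2 * a + 1)) := by ring
  have hcover := iUnion_range_of_coe_eq_razakXi hξ (by omega)
  obtain ⟨u, hu⟩ := (joinedIn_unitaryGroup_one_permMatrix
      (blockReindexPerm hN rfl (indexEquivAtZero n₁ a))).symm.trans
    (joinedIn_unitaryGroup_one_permMatrix (blockReindexPerm hN rfl (indexEquivAtOne n₁ a)))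
  let ξc k : C(I01, I01) := ⟨ξ k, continuous_of_coe_eq_razakXi hξ k⟩
  refine ⟨u, hu, connectingMap rfl u ξc, fun _ _ => rfl, ?_,
    fun f g _ _ => connectingMap_add rfl f g, fun z f _ => connectingMap_smul rfl z f,
    fun f g _ _ => connectingMap_mul rfl hu f g, fun f _ => connectingMap_star rfl hu f,
    fun f g _ _ hfg => connectingMap_injective rfl hu hcover hfg,
    abs_sub_le_of_coe_eq_razakXi hξ, hcover⟩
  rintro f ⟨c, hf₀, hf₁⟩
  refine ⟨cornerBlock n₁ a (f half) c, ?_, ?_⟩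
  · show u 0 * _ * star (u 0) = _
    rw [u.source, permMatrix_mul_mul_star, ← cdiag_submatrix_indexEquivAtZero]
    congr 3
    funext k
    change f (ξ k 0) = _
    rw [apply_zero_of_coe_eq_razakXi hξ, apply_ite f, hf₀]
  · show u 1 * _ * star (u 1) = _
    rw [u.target, permMatrix_mul_mul_star, ← cdiag_submatrix_indexEquivAtOne]
    congr 3
    funext k
    change f (ξ k 1) = _
    rw [apply_one_of_coe_eq_razakXi hξ, apply_ite f, hf₁]
end
end

section
/- Let p, q be positive integers and d = pq. Let B = {g ∈ C([0,1], M_{d²}(ℂ)) : g(0) lies in the linear span of {(X⊗1_q)⊗(Y⊗1_q) : X, Y ∈ M_p(ℂ)} and g(1) lies in the linear span of {(1_p⊗S)⊗(1_p⊗T) : S, T ∈ M_q(ℂ)}}, and let D = {f ∈ C([0,1]×[0,1], M_{d²}(ℂ)) : for all x, y ∈ [0,1], f(0,y) lies in the linear span of {(X⊗1_q)⊗Z : X ∈ M_p(ℂ), Z ∈ M_d(ℂ)}, f(1,y) lies in the linear span of {(1_p⊗S)⊗Z : S ∈ M_q(ℂ), Z ∈ M_d(ℂ)}, f(x,0) lies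 in the linear span of {Z⊗(X⊗1_q) : X ∈ M_p(ℂ), Z ∈ M_d(ℂ)}, and f(x,1) lies in the linear span of {Z⊗(1_p⊗S) : S ∈ M_q(ℂ), Z ∈ M_d(ℂ)}}. Then the restriction-to-the-diagonal map ρ, defined by ρ(f)(x) = f(x,x), is a ⋆-algebra homomorphism from D into B, and ρ is surjective: every g ∈ B equals ρ(f) for some f ∈ D. -/
open scoped Matrix.Norms.L2Operator ComplexOrder
open Filter MeasureTheory

noncomputable section

open scoped Kronecker

/-- `M_{d²}(ℂ)` with `d = pq`, indexed by `(Fin p × Fin q) × (Fin p × Fin q)`. -/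
abbrev Mat2 (p q : ℕ) : Type :=
  Matrix ((Fin p × Fin q) × (Fin p × Fin q)) ((Fin p × Fin q) × (Fin p × Fin q)) ℂ

/-- The algebra `B` of continuous `M_{d²}`-valued functions on `[0,1]` whose value at `0` lies in
`span{(X⊗1_q)⊗(Y⊗1_q)}` and whose value at `1` lies in `span{(1_p⊗S)⊗(1_p⊗T)}`. -/
def Bset (p q : ℕ) : Set C(I01, Mat2 p q) :=
  {g | g 0 ∈ Submodule.span ℂ {m : Mat2 p q | ∃ X Y : Matrix (Fin p) (Fin p) ℂ,
        m = (X ⊗ₖ (1 : Matrix (Fin q) (Fin q) ℂ)) ⊗ₖ (Y ⊗ₖ (1 : Matrix (Fin q) (Fin q) ℂ))} ∧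
      g 1 ∈ Submodule.span ℂ {m : Mat2 p q | ∃ S T : Matrix (Fin q) (Fin q) ℂ,
        m = ((1 : Matrix (Fin p) (Fin p) ℂ) ⊗ₖ S) ⊗ₖ ((1 : Matrix (Fin p) (Fin p) ℂ) ⊗ₖ T)}}

/-- The algebra `D` of continuous `M_{d²}`-valued functions on the square `[0,1] × [0,1]`
satisfying the four edge conditions. -/
def Dset (p q : ℕ) : Set C(I01 × I01, Mat2 p q) :=
  {f | ∀ x y : I01,
    f (0, y) ∈ Submodule.span ℂ {m : Mat2 p q |
      ∃ (X : Matrix (Fin p) (Fin p) ℂ) (Z : Matrix (Fin p × Fin q) (Fin p × Fin q) ℂ),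
        m = (X ⊗ₖ (1 : Matrix (Fin q) (Fin q) ℂ)) ⊗ₖ Z} ∧
    f (1, y) ∈ Submodule.span ℂ {m : Mat2 p q |
      ∃ (S : Matrix (Fin q) (Fin q) ℂ) (Z : Matrix (Fin p × Fin q) (Fin p × Fin q) ℂ),
        m = ((1 : Matrix (Fin p) (Fin p) ℂ) ⊗ₖ S) ⊗ₖ Z} ∧
    f (x, 0) ∈ Submodule.span ℂ {m : Mat2 p q |
      ∃ (X : Matrix (Fin p) (Fin p) ℂ) (Z : Matrix (Fin p × Fin q) (Fin p × Fin q) ℂ),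
        m = Z ⊗ₖ (X ⊗ₖ (1 : Matrix (Fin q) (Fin q) ℂ))} ∧
    f (x, 1) ∈ Submodule.span ℂ {m : Mat2 p q |
      ∃ (S : Matrix (Fin q) (Fin q) ℂ) (Z : Matrix (Fin p × Fin q) (Fin p × Fin q) ℂ),
        m = Z ⊗ₖ ((1 : Matrix (Fin p) (Fin p) ℂ) ⊗ₖ S)}}

/-!
At the corners `(0,0)` and `(1,1)` of the square two edge conditions of `D` meet, and
`span{(X⊗1_q)⊗Z} ∩ span{Z⊗(X⊗1_q)} = span{(X⊗1_q)⊗(Y⊗1_q)}` (likewise with `1_p⊗S`): a matrix in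
both spans has entries that vanish off the diagonal of each `1_q` factor and do not depend on the
position along it, so it is a combination of the `(E_{ii'}⊗1_q)⊗(E_{kk'}⊗1_q)`. Hence restriction
to the diagonal maps `D` into `B`. Conversely `g ∈ B` extends to
`f(x,y) = (1 - max(x,y)) g(min(x,y)) + min(x,y) g(max(x,y))`, which is `g` on the diagonal and on
each edge a scalar multiple of `g 0` or `g 1`.
-/

section KroneckerPattern

variable {R : Type*} [CommSemiring R]

theorem Matrix.apply_eq_ite_of_mem_span {ι β : Type*} [DecidableEq β] (π : ι → β) (σ : ι → ι)
    {G : Set (Matrix ι ι R)}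
    (hG : ∀ g ∈ G, ∀ r c, g r c = if π r = π c then g (σ r) (σ c) else 0)
    {m : Matrix ι ι R} (hm : m ∈ Submodule.span R G) (r c : ι) :
    m r c = if π r = π c then m (σ r) (σ c) else 0 := by
  induction hm using Submodule.span_induction generalizing r c with
  | mem g hg => exact hG g hg r c
  | zero => simp
  | add x y _ _ hx hy => by_cases h : π r = π c <;> simp [hx r c, hy r c, h]
  | smul a x _ hx => by_cases h : π r = π c <;> simp [hx r c, h]

variable {α β : Type*} [DecidableEq α] [DecidableEq β]

theorem mem_span_kronecker_one_of_left_right [Fintype α]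
    {m : Matrix ((α × β) × (α × β)) ((α × β) × (α × β)) R}
    (hl : m ∈ Submodule.span R {m | ∃ (X : Matrix α α R) (Z : Matrix (α × β) (α × β) R),
      m = (X ⊗ₖ (1 : Matrix β β R)) ⊗ₖ Z})
    (hr : m ∈ Submodule.span R {m | ∃ (X : Matrix α α R) (Z : Matrix (α × β) (α × β) R),
      m = Z ⊗ₖ (X ⊗ₖ (1 : Matrix β β R))}) :
    m ∈ Submodule.span R {m | ∃ X Y : Matrix α α R,
      m = (X ⊗ₖ (1 : Matrix β β R)) ⊗ₖ (Y ⊗ₖ (1 : Matrix β β R))} := by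
  cases isEmpty_or_nonempty β
  · rw [Subsingleton.elim m 0]
    exact zero_mem _
  obtain ⟨j₀⟩ := ‹Nonempty β›
  have hl' := Matrix.apply_eq_ite_of_mem_span (fun r => r.1.2) (fun r => ((r.1.1, j₀), r.2))
    (by rintro _ ⟨X, Z, rfl⟩ ⟨⟨i, j⟩, u⟩ ⟨⟨i', j'⟩, u'⟩; simp [Matrix.one_apply]) hl
  have hr' := Matrix.apply_eq_ite_of_mem_span (fun r => r.2.2) (fun r => (r.1, (r.2.1, j₀)))
    (by rintro _ ⟨X, Z, rfl⟩ ⟨u, ⟨k, l⟩⟩ ⟨u', ⟨k', l'⟩⟩; simp [Matrix.one_apply]) hr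
  have hm : m = ∑ i, ∑ i', ∑ k, ∑ k', m ((i, j₀), (k, j₀)) ((i', j₀), (k', j₀)) •
      ((Matrix.single i i' (1 : R) ⊗ₖ (1 : Matrix β β R)) ⊗ₖ
        (Matrix.single k k' (1 : R) ⊗ₖ (1 : Matrix β β R))) := by
    ext ⟨⟨i, j⟩, k, l⟩ ⟨⟨i', j'⟩, k', l'⟩
    rw [hl', hr']
    simp only [Matrix.single, ite_and, Matrix.sum_apply, Matrix.smul_apply,
      Matrix.kroneckerMap_apply, Matrix.of_apply, Matrix.one_apply, mul_ite, mul_comm, mul_one,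
      mul_zero, ite_self, smul_eq_mul, ite_mul, one_mul, zero_mul, Finset.sum_ite_irrel,
      Finset.sum_ite_eq', Finset.mem_univ, ↓reduceIte, Finset.sum_const_zero]
    split_ifs <;> rfl
  rw [hm]
  exact Submodule.sum_mem _ fun i _ => Submodule.sum_mem _ fun i' _ =>
    Submodule.sum_mem _ fun k _ => Submodule.sum_mem _ fun k' _ =>
    Submodule.smul_mem _ _ (Submodule.subset_span ⟨_, _, rfl⟩)

theorem mem_span_one_kronecker_of_left_right [Fintype β]
    {m : Matrix ((α × β) × (α × β)) ((α × β) × (α × β)) R}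
    (hl : m ∈ Submodule.span R {m | ∃ (S : Matrix β β R) (Z : Matrix (α × β) (α × β) R),
      m = ((1 : Matrix α α R) ⊗ₖ S) ⊗ₖ Z})
    (hr : m ∈ Submodule.span R {m | ∃ (S : Matrix β β R) (Z : Matrix (α × β) (α × β) R),
      m = Z ⊗ₖ ((1 : Matrix α α R) ⊗ₖ S)}) :
    m ∈ Submodule.span R {m | ∃ S T : Matrix β β R,
      m = ((1 : Matrix α α R) ⊗ₖ S) ⊗ₖ ((1 : Matrix α α R) ⊗ₖ T)} := by
  cases isEmpty_or_nonempty α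
  · rw [Subsingleton.elim m 0]
    exact zero_mem _
  obtain ⟨i₀⟩ := ‹Nonempty α›
  have hl' := Matrix.apply_eq_ite_of_mem_span (fun r => r.1.1) (fun r => ((i₀, r.1.2), r.2))
    (by rintro _ ⟨S, Z, rfl⟩ ⟨⟨i, j⟩, u⟩ ⟨⟨i', j'⟩, u'⟩; simp [Matrix.one_apply]) hl
  have hr' := Matrix.apply_eq_ite_of_mem_span (fun r => r.2.1) (fun r => (r.1, (i₀, r.2.2)))
    (by rintro _ ⟨S, Z, rfl⟩ ⟨u, ⟨k, l⟩⟩ ⟨u', ⟨k', l'⟩⟩; simp [Matrix.one_apply]) hr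
  have hm : m = ∑ j, ∑ j', ∑ l, ∑ l', m ((i₀, j), (i₀, l)) ((i₀, j'), (i₀, l')) •
      (((1 : Matrix α α R) ⊗ₖ Matrix.single j j' (1 : R)) ⊗ₖ
        ((1 : Matrix α α R) ⊗ₖ Matrix.single l l' (1 : R))) := by
    ext ⟨⟨i, j⟩, k, l⟩ ⟨⟨i', j'⟩, k', l'⟩
    rw [hl', hr']
    simp only [Matrix.single, ite_and, Matrix.sum_apply, Matrix.smul_apply,
      Matrix.kroneckerMap_apply, Matrix.of_apply, Matrix.one_apply, mul_ite, mul_comm, mul_one,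
      mul_zero, ite_self, smul_eq_mul, ite_mul, one_mul, zero_mul, Finset.sum_ite_irrel,
      Finset.sum_ite_eq', Finset.mem_univ, ↓reduceIte, Finset.sum_const_zero]
    split_ifs <;> rfl
  rw [hm]
  exact Submodule.sum_mem _ fun j _ => Submodule.sum_mem _ fun j' _ =>
    Submodule.sum_mem _ fun l _ => Submodule.sum_mem _ fun l' _ =>
    Submodule.smul_mem _ _ (Submodule.subset_span ⟨_, _, rfl⟩)

end KroneckerPattern

section DiagonalExtension

variable {E : Type*} [TopologicalSpace E] [AddCommMonoid E] [ContinuousAdd E] [Module ℝ E]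
  [ContinuousSMul ℝ E]

def diagonalExtension (g : C(I01, E)) : C(I01 × I01, E) where
  toFun z := (1 - ((max z.1 z.2 : I01) : ℝ)) • g (min z.1 z.2) +
    ((min z.1 z.2 : I01) : ℝ) • g (max z.1 z.2)
  continuous_toFun := by fun_prop

variable (g : C(I01, E))

theorem diagonalExtension_apply_self (x : I01) : diagonalExtension g (x, x) = g x := by
  simp [diagonalExtension, ← add_smul]

theorem diagonalExtension_apply_swap (x y : I01) :
    diagonalExtension g (y, x) = diagonalExtension g (x, y) := by
  simp [diagonalExtension, min_comm, max_comm]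

theorem diagonalExtension_zero_left (y : I01) :
    diagonalExtension g (0, y) = (1 - (y : ℝ)) • g 0 := by
  simp [diagonalExtension, y.2.1]

theorem diagonalExtension_one_left (y : I01) :
    diagonalExtension g (1, y) = (y : ℝ) • g 1 := by
  simp [diagonalExtension, y.2.2, unitInterval.le_one']

end DiagonalExtension

theorem diagonalExtension_mem_Dset {p q : ℕ} {g : C(I01, Mat2 p q)} (hg : g ∈ Bset p q) :
    diagonalExtension g ∈ Dset p q := by
  obtain ⟨h₀, h₁⟩ := hg
  intro x y
  rw [diagonalExtension_apply_swap g 0 x, diagonalExtension_apply_swap g 1 x,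
    diagonalExtension_zero_left, diagonalExtension_one_left, diagonalExtension_zero_left,
    diagonalExtension_one_left]
  refine ⟨?_, ?_, ?_, ?_⟩ <;> refine Submodule.smul_of_tower_mem _ _ (Submodule.span_mono ?_ ‹_›)
  · rintro _ ⟨X, Y, rfl⟩; exact ⟨X, _, rfl⟩
  · rintro _ ⟨S, T, rfl⟩; exact ⟨S, _, rfl⟩
  · rintro _ ⟨X, Y, rfl⟩; exact ⟨Y, _, rfl⟩
  · rintro _ ⟨S, T, rfl⟩; exact ⟨T, _, rfl⟩

theorem diagonal_restriction_surjective_general (p q : ℕ) :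
    ∃ ρ : C(I01 × I01, Mat2 p q) → C(I01, Mat2 p q),
      (∀ (f : C(I01 × I01, Mat2 p q)) (x : I01), ρ f x = f (x, x)) ∧
      (∀ f ∈ Dset p q, ρ f ∈ Bset p q) ∧
      (∀ f g, f ∈ Dset p q → g ∈ Dset p q → ρ (f + g) = ρ f + ρ g) ∧
      (∀ (z : ℂ) (f), f ∈ Dset p q → ρ (z • f) = z • ρ f) ∧
      (∀ f g, f ∈ Dset p q → g ∈ Dset p q → ρ (f * g) = ρ f * ρ g) ∧
      (∀ f, f ∈ Dset p q → ρ (star f) = star (ρ f)) ∧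
      (∀ g ∈ Bset p q, ∃ f ∈ Dset p q, ρ f = g) := by
  refine ⟨fun f => f.comp ((ContinuousMap.id I01).prodMk (ContinuousMap.id I01)),
    fun _ _ => rfl, fun f hf => ?_, fun _ _ _ _ => rfl, fun _ _ _ => rfl, fun _ _ _ _ => rfl,
    fun _ _ => rfl, fun g hg => ⟨diagonalExtension g, diagonalExtension_mem_Dset hg,
      ContinuousMap.ext (diagonalExtension_apply_self g)⟩⟩
  obtain ⟨hl₀, -, hr₀, -⟩ := hf 0 0
  obtain ⟨-, hl₁, -, hr₁⟩ := hf 1 1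
  exact ⟨mem_span_kronecker_one_of_left_right hl₀ hr₀,
    mem_span_one_kronecker_of_left_right hl₁ hr₁⟩

/-- restriction to the diagonal is a surjective ⋆-algebra homomorphism from `D`
onto `B`. -/
theorem diagonal_restriction_surjective (p q : ℕ) (hp : 0 < p) (hq : 0 < q) :
    ∃ ρ : C(I01 × I01, Mat2 p q) → C(I01, Mat2 p q),
      (∀ (f : C(I01 × I01, Mat2 p q)) (x : I01), ρ f x = f (x, x)) ∧
      (∀ f ∈ Dset p q, ρ f ∈ Bset p q) ∧
      (∀ f g, f ∈ Dset p q → g ∈ Dset p q → ρ (f + g) = ρ f + ρ g) ∧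
      (∀ (z : ℂ) (f), f ∈ Dset p q → ρ (z • f) = z • ρ f) ∧
      (∀ f g, f ∈ Dset p q → g ∈ Dset p q → ρ (f * g) = ρ f * ρ g) ∧
      (∀ f, f ∈ Dset p q → ρ (star f) = star (ρ f)) ∧
      (∀ g ∈ Bset p q, ∃ f ∈ Dset p q, ρ f = g) :=
  diagonal_restriction_surjective_general p q
end
end
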